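/- The nine unit vectors w₁=(1,0,0), w₂=(0,1,0), w₃=(0,0,1), w₄=(0,1/√2,−1/√2), w₅=(1/√3,0,−√2/√3), w₆=(1/√3,√2/√3,0), w₇=(1/√2,1/2,1/2), w₈=(1/√2,−1/2,−1/2), w₉=(1/√2,−1/2,1/2) in ℝ³ satisfy wᵢ · wⱼ = 0 exactly for the pairs {i,j} in the edge set {1,2},{1,3},{1,4},{2,3},{2,5},{3,6},{4,7},{4,8},{5,7},{5,9},{6,8},{6,9},{7,8} of the KK graph. -/
import Mathlib

/-- The nine KK measurement vectors in ℝ³ (indexed by `Fin 9`, vector `i`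
standing for w_{i+1}). -/
noncomputable def kkVec : Fin 9 → Fin 3 → ℝ :=
  ![![1, 0, 0],
    ![0, 1, 0],
    ![0, 0, 1],
    ![0, 1 / Real.sqrt 2, -(1 / Real.sqrt 2)],
    ![1 / Real.sqrt 3, 0, -(Real.sqrt 2 / Real.sqrt 3)],
    ![1 / Real.sqrt 3, Real.sqrt 2 / Real.sqrt 3, 0],
    ![1 / Real.sqrt 2, 1 / 2, 1 / 2],
    ![1 / Real.sqrt 2, -(1 / 2), -(1 / 2)],
    ![1 / Real.sqrt 2, -(1 / 2), 1 / 2]]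

/-- Edges of the Kurzyński–Kaszlikowski exclusivity graph on vertices {1,…,9}. -/
def KKedges : List (ℕ × ℕ) :=
  [(1,2),(1,3),(1,4),(2,3),(2,5),(3,6),(4,7),(4,8),(5,7),(5,9),(6,8),(6,9),(7,8)]

lemma kkVec0 : kkVec 0 = ![1, 0, 0] := rfl
lemma kkVec1 : kkVec 1 = ![0, 1, 0] := rfl
lemma kkVec2 : kkVec 2 = ![0, 0, 1] := rfl
lemma kkVec3 : kkVec 3 = ![0, 1 / Real.sqrt 2, -(1 / Real.sqrt 2)] := rfl
lemma kkVec4 : kkVec 4 = ![1 / Real.sqrt 3, 0, -(Real.sqrt 2 / Real.sqrt 3)] := rfl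
lemma kkVec5 : kkVec 5 = ![1 / Real.sqrt 3, Real.sqrt 2 / Real.sqrt 3, 0] := rfl
lemma kkVec6 : kkVec 6 = ![1 / Real.sqrt 2, 1 / 2, 1 / 2] := rfl
lemma kkVec7 : kkVec 7 = ![1 / Real.sqrt 2, -(1 / 2), -(1 / 2)] := rfl
lemma kkVec8 : kkVec 8 = ![1 / Real.sqrt 2, -(1 / 2), 1 / 2] := rfl

set_option maxHeartbeats 4000000 in
/-- The KK vectors realize the KK exclusivity graph via orthogonality:
for i ≠ j, `wᵢ · wⱼ = 0` exactly when {i,j} is an edge of the KK graph. -/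
theorem kk_vectors_realize_graph :
    ∀ i j : Fin 9, i ≠ j →
      ((∑ t, kkVec i t * kkVec j t = 0) ↔
        ((i.val + 1, j.val + 1) ∈ KKedges ∨ (j.val + 1, i.val + 1) ∈ KKedges)) := by
  have h2 : Real.sqrt 2 > 0 := Real.sqrt_pos.mpr (by norm_num)
  have h3 : Real.sqrt 3 > 0 := Real.sqrt_pos.mpr (by norm_num)
  have e2 : Real.sqrt 2 * Real.sqrt 2 = 2 := Real.mul_self_sqrt (by norm_num)
  have e3 : Real.sqrt 3 * Real.sqrt 3 = 3 := Real.mul_self_sqrt (by norm_num)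
  intro i j hij
  rw [Fin.sum_univ_three]
  fin_cases i <;> fin_cases j <;>
    first
      | exact absurd rfl hij
      | (simp [kkVec0, kkVec1, kkVec2, kkVec3, kkVec4, kkVec5, kkVec6, kkVec7, kkVec8,
          KKedges] <;> field_simp <;> nlinarith [h2, h3, e2, e3, mul_pos h2 h3])
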